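/- arXiv:2509.04192 — 3 statements merged into one kernel-verified Lean document; each statement's English description precedes it below -/
import Mathlib

section
/- Let $\mathbf{W}_n$ be the set of $\sigma$-structures with domain $[n]$ for a finite relational language $\sigma$ with $r$ relation symbols of maximal arity $\rho$, so $|\mathbf{W}_n| \leq 2^{r n^{\rho}}$. Let $\varphi(x_1,\ldots,x_\nu)$ be a formula, $w > 0$, and define the measure $\mu_n(\mathcal{A}) = 2^{w|\varphi(\mathcal{A})|}$ where $|\varphi(\mathcal{A})|$ is the number of $\nu$-tuples satisfying $\varphi$ in $\mathcal{A}$, and $\mathbb{P}_n(\mathbf{X}) = \mu_n(\mathbf{X})/\mu_n(\mathbf{W}_n)$. Let $\mathbf{Y}_n^t = \{\mathcal{A} \in \mathbf{W}_n : |\neg\varphi(\mathcal{A})| \leq t\}$ and $f(n) = rn^{\rho}/w$. If $|\mathbf{Y}_n^0| \geq 2^{cn}$ for some $c > 0$ and all sufficiently large $n$, then for all sufficiently large $n$, $\mathbb{P}_n(\mathbf{Y}_n^{f(n)}) \geq 1 - 2^{-cn}$. -/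
/-!
Every world violating none of the `N` tuples has the maximal weight `2^{wN}`, so the partition
function is at least `|Y⁰| · 2^{wN} ≥ 2^{c} · 2^{wN}`. A world with more than `R / w` violations
has weight below `2^{wN - R}`, and there are at most `|W| ≤ 2^R` worlds, so together they weigh
at most `2^{wN}`, a `2^{-c}` fraction of the partition function.
-/

open Finset

section

variable {α : Type*} [Fintype α]

theorem one_sub_le_sum_filter_div_sum {f : α → ℝ} (p : α → Prop) [DecidablePred p] {ε : ℝ}
    (hpos : 0 < ∑ a, f a) (hnot : ∑ a ∈ univ.filter (fun a => ¬ p a), f a ≤ ε * ∑ a, f a) :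
    1 - ε ≤ (∑ a ∈ univ.filter p, f a) / ∑ a, f a := by
  rw [le_div_iff₀ hpos]
  have hsplit := sum_filter_add_sum_filter_not univ p f
  linarith

variable (sat : α → ℕ) (N : ℕ) (w : ℝ)

theorem card_mul_rpow_le_sum_rpow :
    ((univ.filter (fun a => sat a = N)).card : ℝ) * 2 ^ (w * N) ≤ ∑ a, (2 : ℝ) ^ (w * sat a) :=
  calc ((univ.filter (fun a => sat a = N)).card : ℝ) * 2 ^ (w * N)
      = ∑ a ∈ univ.filter (fun a => sat a = N), (2 : ℝ) ^ (w * sat a) := by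
        rw [sum_congr rfl fun a ha => by rw [(mem_filter.1 ha).2], sum_const, nsmul_eq_mul]
    _ ≤ ∑ a, (2 : ℝ) ^ (w * sat a) :=
        sum_le_sum_of_subset_of_nonneg (subset_univ _) fun a _ _ => by positivity

variable {sat N w}

theorem sum_rpow_filter_many_violations_le (hw : 0 < w) (hsat : ∀ a, sat a ≤ N) (R : ℝ) :
    ∑ a ∈ univ.filter (fun a => ¬ ((N - sat a : ℕ) : ℝ) ≤ R / w), (2 : ℝ) ^ (w * sat a)
      ≤ Fintype.card α * 2 ^ (w * N - R) := by
  have hweight : ∀ a ∈ univ.filter (fun a => ¬ ((N - sat a : ℕ) : ℝ) ≤ R / w),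
      (2 : ℝ) ^ (w * sat a) ≤ 2 ^ (w * N - R) := by
    intro a ha
    have hlt : R / w < (N : ℝ) - sat a := by
      rw [← Nat.cast_sub (hsat a)]
      exact not_le.1 (mem_filter.1 ha).2
    rw [div_lt_iff₀ hw] at hlt
    exact Real.rpow_le_rpow_of_exponent_le one_le_two (by linarith)
  calc _ ≤ (univ.filter (fun a => ¬ ((N - sat a : ℕ) : ℝ) ≤ R / w)).card • (2 : ℝ) ^ (w * N - R) :=
        sum_le_card_nsmul _ _ _ hweight
    _ ≤ Fintype.card α * 2 ^ (w * N - R) := by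
        rw [nsmul_eq_mul]
        gcongr
        exact_mod_cast card_le_univ _

theorem one_sub_rpow_neg_le_prob_few_violations {R c : ℝ} (hw : 0 < w) (hsat : ∀ a, sat a ≤ N)
    (hcard : (Fintype.card α : ℝ) ≤ 2 ^ R)
    (hY0 : (2 : ℝ) ^ c ≤ (univ.filter (fun a => sat a = N)).card) :
    1 - 2 ^ (-c) ≤
      (∑ a ∈ univ.filter (fun a => ((N - sat a : ℕ) : ℝ) ≤ R / w), (2 : ℝ) ^ (w * sat a)) /
        ∑ a, (2 : ℝ) ^ (w * sat a) := by
  have hlower : (2 : ℝ) ^ c * 2 ^ (w * N) ≤ ∑ a, (2 : ℝ) ^ (w * sat a) :=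
    (mul_le_mul_of_nonneg_right hY0 (by positivity)).trans (card_mul_rpow_le_sum_rpow sat N w)
  refine one_sub_le_sum_filter_div_sum _ (hlower.trans_lt' (by positivity)) ?_
  calc _ ≤ Fintype.card α * (2 : ℝ) ^ (w * N - R) := sum_rpow_filter_many_violations_le hw hsat R
    _ ≤ 2 ^ R * 2 ^ (w * N - R) := by gcongr
    _ = 2 ^ (-c) * (2 ^ c * 2 ^ (w * N)) := by
        rw [← mul_assoc, ← Real.rpow_add two_pos, ← Real.rpow_add two_pos,
          ← Real.rpow_add two_pos]
        ring_nf
    _ ≤ 2 ^ (-c) * ∑ a, (2 : ℝ) ^ (w * sat a) := by gcongr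

end

theorem mln_concentrates_on_few_violations_general
    (r ρ ν : ℕ) (w c : ℝ) (hw : 0 < w)
    (W : ℕ → Type) [∀ n, Fintype (W n)]
    (sat : ∀ n, W n → ℕ)
    (hsat : ∀ n (a : W n), sat n a ≤ n ^ ν)
    (hWcard : ∀ n : ℕ, (Fintype.card (W n) : ℝ) ≤ (2 : ℝ) ^ ((r : ℝ) * (n : ℝ) ^ ρ))
    (hY0 : ∀ᶠ n : ℕ in Filter.atTop,
      (2 : ℝ) ^ (c * n) ≤
        ((Finset.univ.filter (fun a : W n => sat n a = n ^ ν)).card : ℝ)) :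
    ∀ᶠ n : ℕ in Filter.atTop,
      1 - (2 : ℝ) ^ (-(c * n)) ≤
        (∑ a ∈ Finset.univ.filter
            (fun a : W n => ((n ^ ν - sat n a : ℕ) : ℝ) ≤ (r : ℝ) * (n : ℝ) ^ ρ / w),
            (2 : ℝ) ^ (w * sat n a)) /
          (∑ a : W n, (2 : ℝ) ^ (w * sat n a)) := by
  filter_upwards [hY0] with n hn
  exact one_sub_rpow_neg_le_prob_few_violations hw (hsat n) (hWcard n) hn

/-- MLN with one soft constraint `φ` of arity `ν` and weight `w > 0`, over a language with
`r` relation symbols of maximal arity `ρ`.  For each domain size `n`, `W n` is the (finite)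
set of possible worlds, with `|W n| ≤ 2^{r n^ρ}`; `sat n A` is the number `|φ(A)|` of
`ν`-tuples satisfying `φ` in `A` (so `sat n A ≤ n^ν` and the number of violating tuples is
`n^ν - sat n A`).  The MLN weight is `μ(A) = 2^{w · sat A}` and `P_n(X) = μ(X)/μ(W n)`.
If `|Y_n^0| = |{A : sat A = n^ν}| ≥ 2^{cn}` for some `c > 0` and all large `n`, then for all
large `n` the set `Y_n^{f(n)}` with `f(n) = r n^ρ / w` has probability at least `1 - 2^{-cn}`. -/
theorem mln_concentrates_on_few_violations
    (r ρ ν : ℕ) (w c : ℝ) (hw : 0 < w) (hc : 0 < c)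
    (W : ℕ → Type) [∀ n, Fintype (W n)]
    (sat : ∀ n, W n → ℕ)
    (hsat : ∀ n (a : W n), sat n a ≤ n ^ ν)
    (hWcard : ∀ n : ℕ, (Fintype.card (W n) : ℝ) ≤ (2 : ℝ) ^ ((r : ℝ) * (n : ℝ) ^ ρ))
    (hY0 : ∀ᶠ n : ℕ in Filter.atTop,
      (2 : ℝ) ^ (c * n) ≤
        ((Finset.univ.filter (fun a : W n => sat n a = n ^ ν)).card : ℝ)) :
    ∀ᶠ n : ℕ in Filter.atTop,
      1 - (2 : ℝ) ^ (-(c * n)) ≤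
        (∑ a ∈ Finset.univ.filter
            (fun a : W n => ((n ^ ν - sat n a : ℕ) : ℝ) ≤ (r : ℝ) * (n : ℝ) ^ ρ / w),
            (2 : ℝ) ^ (w * sat n a)) /
          (∑ a : W n, (2 : ℝ) ^ (w * sat n a)) :=
  mln_concentrates_on_few_violations_general r ρ ν w c hw W sat hsat hWcard hY0
end

section
/- Consider the probability distribution on subsets $M \subseteq [n]$ where the weight of $M$ is $2^{|M|^2 + (n-|M|)^2}$ (and probability is weight divided by total weight over all subsets). Then the probability that $M = \emptyset$ tends to $1/2$ and the probability that $M = [n]$ tends to $1/2$ as $n \to \infty$. -/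
/-!
Since `k² + (n - k)² = n² - 2k(n - k)`, dividing the total weight by `2^{n²}` turns it into
`∑_M 4^{-|M| (n - |M|)}`. The subsets `∅` and `[n]` contribute `1` each; every other subset has
`|M| (n - |M|) ≥ n - 1`, so the remaining at most `2ⁿ` terms add up to at most `2ⁿ 4^{1-n} → 0`.
Hence the normalised total weight tends to `2`, and each of `∅`, `[n]` has probability tending to
`1/2`.
-/

open Filter Finset Topology

lemma sq_add_sq_sub_add_two_mul_mul_sub {k n : ℕ} (h : k ≤ n) :
    k ^ 2 + (n - k) ^ 2 + 2 * (k * (n - k)) = n ^ 2 := by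
  obtain ⟨d, rfl⟩ := Nat.exists_eq_add_of_le h
  rw [Nat.add_sub_cancel_left]
  ring

lemma two_pow_sq_add_sq_sub {k n : ℕ} (h : k ≤ n) :
    (2 : ℝ) ^ (k ^ 2 + (n - k) ^ 2) = 2 ^ n ^ 2 * (1 / 4) ^ (k * (n - k)) := by
  rw [← sq_add_sq_sub_add_two_mul_mul_sub h, pow_add (2 : ℝ) _ (2 * _), pow_mul (2 : ℝ) 2,
    mul_assoc, ← mul_pow]
  norm_num

lemma add_sub_one_le_mul {a b : ℕ} (ha : 0 < a) (hb : 0 < b) : a + b - 1 ≤ a * b := by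
  obtain ⟨a, rfl⟩ := Nat.exists_eq_add_of_lt ha
  obtain ⟨b, rfl⟩ := Nat.exists_eq_add_of_lt hb
  rw [Nat.sub_le_iff_le_add]
  nlinarith

section SubsetSum

variable {α : Type*} [Fintype α] [DecidableEq α] {x : ℝ}

lemma sum_pow_card_mul_card_compl_empty_univ [Nonempty α] :
    ∑ s ∈ ({∅, univ} : Finset (Finset α)), x ^ (#s * #sᶜ) = 2 := by
  rw [sum_pair univ_nonempty.ne_empty.symm]
  simp only [card_empty, zero_mul, compl_univ, mul_zero, pow_zero]
  norm_num

lemma two_le_sum_pow_card_mul_card_compl [Nonempty α] (hx : 0 ≤ x) :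
    2 ≤ ∑ s : Finset α, x ^ (#s * #sᶜ) := by
  rw [← sum_pow_card_mul_card_compl_empty_univ (α := α) (x := x)]
  exact sum_le_sum_of_subset_of_nonneg (subset_univ _) fun _ _ _ ↦ pow_nonneg hx _

lemma card_sub_one_le_card_mul_card_compl {s : Finset α} (hs : s ∉ ({∅, univ} : Finset _)) :
    Fintype.card α - 1 ≤ #s * #sᶜ := by
  simp only [mem_insert, mem_singleton, not_or] at hs
  rw [← card_add_card_compl s]
  apply add_sub_one_le_mul
  · exact card_pos.2 (nonempty_iff_ne_empty.2 hs.1)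
  · exact card_pos.2 (nonempty_iff_ne_empty.2 ((compl_eq_empty_iff s).not.2 hs.2))

lemma sum_pow_card_mul_card_compl_le [Nonempty α] (hx0 : 0 ≤ x) (hx1 : x ≤ 1) :
    ∑ s : Finset α, x ^ (#s * #sᶜ) ≤ 2 + 2 ^ Fintype.card α * x ^ (Fintype.card α - 1) := by
  rw [← sum_sdiff (subset_univ {∅, univ}), sum_pow_card_mul_card_compl_empty_univ, add_comm]
  gcongr
  calc ∑ s ∈ univ \ {∅, univ}, x ^ (#s * #sᶜ)
      ≤ #(univ \ {∅, univ}) • x ^ (Fintype.card α - 1) := by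
        refine sum_le_card_nsmul _ _ _ fun s hs ↦ ?_
        exact pow_le_pow_of_le_one hx0 hx1
          (card_sub_one_le_card_mul_card_compl (mem_sdiff.1 hs).2)
    _ ≤ 2 ^ Fintype.card α * x ^ (Fintype.card α - 1) := by
        rw [nsmul_eq_mul]
        gcongr
        calc (#(univ \ {∅, univ}) : ℝ) ≤ #(univ : Finset (Finset α)) := by
              exact_mod_cast card_le_card sdiff_subset
          _ = 2 ^ Fintype.card α := by simp

end SubsetSum

lemma tendsto_two_pow_mul_pow_sub_one {x : ℝ} (hx0 : 0 ≤ x) (hx : x < 1 / 2) :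
    Tendsto (fun n : ℕ ↦ 2 ^ n * x ^ (n - 1)) atTop (𝓝 0) := by
  have hgeom : Tendsto (fun n : ℕ ↦ 2 * (2 * x) ^ (n - 1)) atTop (𝓝 0) := by
    have h2x : Tendsto (fun n : ℕ ↦ (2 * x) ^ n) atTop (𝓝 0) :=
      tendsto_pow_atTop_nhds_zero_of_lt_one (by positivity) (by linarith)
    simpa using (h2x.comp (tendsto_sub_atTop_nat 1)).const_mul 2
  refine hgeom.congr' ?_
  filter_upwards [eventually_ge_atTop 1] with n hn
  obtain ⟨m, rfl⟩ := Nat.exists_eq_add_of_le' hn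
  simp only [Nat.add_sub_cancel, mul_pow, pow_succ]
  ring

lemma tendsto_sum_pow_card_mul_card_compl {x : ℝ} (hx0 : 0 ≤ x) (hx : x < 1 / 2) :
    Tendsto (fun n : ℕ ↦ ∑ s : Finset (Fin n), x ^ (#s * #sᶜ)) atTop (𝓝 2) := by
  have hupper := (tendsto_two_pow_mul_pow_sub_one hx0 hx).const_add 2
  rw [add_zero] at hupper
  refine tendsto_of_tendsto_of_tendsto_of_le_of_le' tendsto_const_nhds hupper ?_ ?_
  all_goals filter_upwards [eventually_gt_atTop 0] with n hn
  · have := Fin.pos_iff_nonempty.1 hn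
    exact two_le_sum_pow_card_mul_card_compl hx0
  · have := Fin.pos_iff_nonempty.1 hn
    simpa using sum_pow_card_mul_card_compl_le (α := Fin n) hx0 (by linarith)

/-- In the weighted distribution on subsets `M ⊆ [n]` with weight `2^{|M|² + (n-|M|)²}`,
the probability that `M = ∅` tends to `1/2` and the probability that `M = [n]` tends to
`1/2` as `n → ∞`. -/
theorem weighted_subsets_concentrate_on_empty_and_full :
    Filter.Tendsto (fun n : ℕ =>
      (2 : ℝ) ^ ((∅ : Finset (Fin n)).card ^ 2 + (n - (∅ : Finset (Fin n)).card) ^ 2) /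
        ∑ M : Finset (Fin n), (2 : ℝ) ^ (M.card ^ 2 + (n - M.card) ^ 2))
      Filter.atTop (nhds (1 / 2)) ∧
    Filter.Tendsto (fun n : ℕ =>
      (2 : ℝ) ^ ((Finset.univ : Finset (Fin n)).card ^ 2 +
          (n - (Finset.univ : Finset (Fin n)).card) ^ 2) /
        ∑ M : Finset (Fin n), (2 : ℝ) ^ (M.card ^ 2 + (n - M.card) ^ 2))
      Filter.atTop (nhds (1 / 2)) := by
  have htotal (n : ℕ) : ∑ M : Finset (Fin n), (2 : ℝ) ^ (#M ^ 2 + (n - #M) ^ 2) =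
      2 ^ n ^ 2 * ∑ M : Finset (Fin n), (1 / 4 : ℝ) ^ (#M * #Mᶜ) := by
    rw [mul_sum]
    refine sum_congr rfl fun M _ ↦ ?_
    rw [card_compl, Fintype.card_fin, two_pow_sq_add_sq_sub (card_le_univ M |>.trans_eq (by simp))]
  have hprob : Tendsto (fun n : ℕ ↦ (2 : ℝ) ^ n ^ 2 /
      ∑ M : Finset (Fin n), (2 : ℝ) ^ (#M ^ 2 + (n - #M) ^ 2)) atTop (𝓝 (1 / 2)) := by
    simp_rw [htotal, div_mul_cancel_left₀ (pow_ne_zero _ (two_ne_zero (α := ℝ))), one_div]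
    exact (tendsto_sum_pow_card_mul_card_compl (by norm_num) (by norm_num)).inv₀ two_ne_zero
  constructor <;> convert hprob using 3 <;> simp
end

section
/- With $F_i$ as above, the map $F_i$ restricted to graphs on $[n]$ of maximum degree at most $\Delta$ is at most $2^{\binom{2\Delta+3}{2}}$-to-one; hence $|F_i(\Omega_n^\Delta)| \geq |\Omega_n^\Delta| / 2^{\binom{2\Delta+3}{2}}$, where $\Omega_n^\Delta$ is the set of graphs on $[n]$ with maximum degree at most $\Delta$. -/
/-!
A graph `G` in the fibre of `F_i` over `H` agrees with `H` away from `i`, so it is determined by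
its neighbourhood of `i`, a subset of `N_H(i)`; the fibre therefore has at most `2 ^ |N_H(i)|`
elements. If the fibre contains a graph of maximum degree at most `Δ`, then
`|N_H(i)| ≤ Δ + (Δ + 3)`, and `2Δ + 3 ≤ C(2Δ + 3, 2)`. Summing the fibre sizes over the image
gives the lower bound on `|F_i(Ω)|`.
-/

/-- The first `Δ + 2` vertices of `Fin n` different from `i`
(assuming `n ≥ Δ + 3`). -/
def firstVerts (n Δ : ℕ) (i : Fin n) : Set (Fin n) :=
  {v | v ≠ i ∧ (v : ℕ) < Δ + 2 + (if (i : ℕ) < Δ + 2 then 1 else 0)}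

/-- The graph `F_i(G)` obtained from `G` by adding all edges between `i` and the first
`Δ + 2` vertices different from `i`. -/
def addEdges (n Δ : ℕ) (i : Fin n) (G : SimpleGraph (Fin n)) : SimpleGraph (Fin n) where
  Adj a b := a ≠ b ∧ (G.Adj a b ∨ (a = i ∧ b ∈ firstVerts n Δ i) ∨
    (b = i ∧ a ∈ firstVerts n Δ i))
  symm := by
    constructor
    intro a b ⟨hne, h⟩
    refine ⟨hne.symm, ?_⟩
    rcases h with h | h | h
    · exact Or.inl (G.adj_symm h)
    · exact Or.inr (Or.inr h)
    · exact Or.inr (Or.inl h)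
  loopless := by constructor; intro a ⟨hne, _⟩; exact hne rfl

open SimpleGraph

theorem Set.ncard_le_ncard_image_mul {α β : Type*} {f : α → β} {s : Set α} (hs : s.Finite)
    {k : ℕ} (hf : ∀ b, {a ∈ s | f a = b}.ncard ≤ k) : s.ncard ≤ (f '' s).ncard * k := by
  classical
  obtain ⟨t, rfl⟩ := hs.exists_finset_coe
  rw [← Finset.coe_image, Set.ncard_coe_finset, Set.ncard_coe_finset, mul_comm]
  refine Finset.card_le_mul_card_image t k fun b _ => ?_
  rw [← Set.ncard_coe_finset, Finset.coe_filter]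
  exact hf b

theorem Nat.le_choose_two {n : ℕ} (hn : 3 ≤ n) : n ≤ n.choose 2 := by
  rw [Nat.choose_two_right, Nat.le_div_iff_mul_le two_pos]
  exact Nat.mul_le_mul_left n (by omega)

section addEdges

variable {n Δ : ℕ} {i : Fin n}

theorem ncard_firstVerts_le : (firstVerts n Δ i).ncard ≤ Δ + 3 := by
  have hmaps : ∀ v ∈ firstVerts n Δ i, (v : ℕ) ∈ Set.Iio (Δ + 3) := fun v hv => by
    have := hv.2
    rw [Set.mem_Iio]
    split_ifs at this <;> omega
  calc (firstVerts n Δ i).ncard ≤ (Set.Iio (Δ + 3)).ncard :=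
        Set.ncard_le_ncard_of_injOn Fin.val hmaps Fin.val_injective.injOn
    _ = Δ + 3 := by rw [← Finset.coe_Iio, Set.ncard_coe_finset, Nat.card_Iio]

theorem neighborSet_addEdges_self (G : SimpleGraph (Fin n)) :
    (addEdges n Δ i G).neighborSet i = G.neighborSet i ∪ firstVerts n Δ i := by
  ext b
  simp only [mem_neighborSet, addEdges, Set.mem_union]
  constructor
  · rintro ⟨-, h | h | h⟩
    · exact Or.inl h
    · exact Or.inr h.2
    · exact Or.inr (h.1 ▸ h.2)
  · rintro (h | h)
    · exact ⟨G.ne_of_adj h, Or.inl h⟩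
    · exact ⟨fun e => h.1 e.symm, Or.inr (Or.inl ⟨trivial, h⟩)⟩

theorem addEdges_adj_of_ne {G : SimpleGraph (Fin n)} {a b : Fin n} (ha : a ≠ i) (hb : b ≠ i) :
    (addEdges n Δ i G).Adj a b ↔ G.Adj a b := by
  simp only [addEdges, ha, hb, false_and, or_false]
  exact ⟨And.right, fun h => ⟨G.ne_of_adj h, h⟩⟩

theorem eq_of_addEdges_eq_of_neighborSet_eq {G G' : SimpleGraph (Fin n)}
    (h : addEdges n Δ i G = addEdges n Δ i G') (hN : G.neighborSet i = G'.neighborSet i) :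
    G = G' := by
  have hi : ∀ b, G.Adj i b ↔ G'.Adj i b := fun b => by
    simpa only [mem_neighborSet] using Set.ext_iff.mp hN b
  ext a b
  by_cases ha : a = i
  · exact ha ▸ hi b
  by_cases hb : b = i
  · subst hb
    rw [adj_comm, hi a, adj_comm]
  · rw [← addEdges_adj_of_ne (Δ := Δ) ha hb, h, addEdges_adj_of_ne ha hb]

theorem ncard_addEdges_fiber_le (H : SimpleGraph (Fin n)) :
    {G | addEdges n Δ i G = H}.ncard ≤ 2 ^ (H.neighborSet i).ncard := by
  rw [← Set.ncard_powerset (H.neighborSet i)]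
  refine Set.ncard_le_ncard_of_injOn (fun G => G.neighborSet i) (fun G hG => ?_)
    (fun G hG G' hG' hN => eq_of_addEdges_eq_of_neighborSet_eq (hG.trans hG'.symm) hN)
  rw [Set.mem_powerset_iff, ← hG.out, neighborSet_addEdges_self]
  exact Set.subset_union_left

theorem ncard_neighborSet_addEdges_self_le {G : SimpleGraph (Fin n)}
    (hG : (G.neighborSet i).ncard ≤ Δ) :
    ((addEdges n Δ i G).neighborSet i).ncard ≤ 2 * Δ + 3 := by
  rw [neighborSet_addEdges_self]
  calc (G.neighborSet i ∪ firstVerts n Δ i).ncard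
      ≤ (G.neighborSet i).ncard + (firstVerts n Δ i).ncard := Set.ncard_union_le _ _
    _ ≤ 2 * Δ + 3 := by linarith [ncard_firstVerts_le (n := n) (Δ := Δ) (i := i)]

end addEdges

theorem addEdges_almost_injective_general (Δ n : ℕ) (i : Fin n) :
    let Ω : Set (SimpleGraph (Fin n)) := {G | ∀ v, (G.neighborSet v).ncard ≤ Δ}
    (∀ H : SimpleGraph (Fin n),
      {G ∈ Ω | addEdges n Δ i G = H}.ncard ≤ 2 ^ (Nat.choose (2 * Δ + 3) 2)) ∧
    Ω.ncard ≤ ((addEdges n Δ i) '' Ω).ncard * 2 ^ (Nat.choose (2 * Δ + 3) 2) := by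
  intro Ω
  have hfiber : ∀ H : SimpleGraph (Fin n),
      {G ∈ Ω | addEdges n Δ i G = H}.ncard ≤ 2 ^ (Nat.choose (2 * Δ + 3) 2) := by
    intro H
    rcases Set.eq_empty_or_nonempty {G ∈ Ω | addEdges n Δ i G = H} with hempty | ⟨G₀, hG₀Ω, rfl⟩
    · simp [hempty]
    calc {G ∈ Ω | addEdges n Δ i G = addEdges n Δ i G₀}.ncard
        ≤ {G | addEdges n Δ i G = addEdges n Δ i G₀}.ncard :=
          Set.ncard_le_ncard fun G hG => hG.2
      _ ≤ 2 ^ ((addEdges n Δ i G₀).neighborSet i).ncard := ncard_addEdges_fiber_le _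
      _ ≤ 2 ^ (2 * Δ + 3) := Nat.pow_le_pow_right two_pos
          (ncard_neighborSet_addEdges_self_le (hG₀Ω i))
      _ ≤ 2 ^ (Nat.choose (2 * Δ + 3) 2) := Nat.pow_le_pow_right two_pos
          (Nat.le_choose_two (by omega))
  exact ⟨hfiber, Set.ncard_le_ncard_image_mul (Set.toFinite Ω) hfiber⟩

/-- The map `F_i` restricted to the set `Ω` of graphs on `[n]` of maximum degree at most
`Δ` is at most `2^{C(2Δ+3, 2)}`-to-one; hence `|F_i(Ω)| ≥ |Ω| / 2^{C(2Δ+3,2)}`. -/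
theorem addEdges_almost_injective (Δ n : ℕ) (hΔ : 1 ≤ Δ) (hn : Δ + 3 ≤ n) (i : Fin n) :
    let Ω : Set (SimpleGraph (Fin n)) := {G | ∀ v, (G.neighborSet v).ncard ≤ Δ}
    (∀ H : SimpleGraph (Fin n),
      {G ∈ Ω | addEdges n Δ i G = H}.ncard ≤ 2 ^ (Nat.choose (2 * Δ + 3) 2)) ∧
    Ω.ncard ≤ ((addEdges n Δ i) '' Ω).ncard * 2 ^ (Nat.choose (2 * Δ + 3) 2) :=
  addEdges_almost_injective_general Δ n i
end
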